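/- arXiv:1507.05194 — 5 statements merged into one kernel-verified Lean document; each statement's English description precedes it below -/
import Mathlib

section
/- If there exists s' with 1 ≤ s' ≤ k such that ∑_{j=0}^{s'-1} p j < s', then N t ≤ ∑_{j=0}^{s'-1} p j for every t; in particular, if moreover ∑_{j=s'}^{k} p j > 0, then no standing ovation occurs for p. -/
/-- The applause process of an audience `p`: `N 0 = p 0` and
`N (t+1) = ∑_{j=0}^{N t} p j`. -/
def applause (p : ℕ → ℕ) : ℕ → ℕ
  | 0 => p 0
  | t + 1 => ∑ j ∈ Finset.range (applause p t + 1), p j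

/-- A standing ovation occurs for the audience `p` (supported on `[0,k]`)
iff the applause process reaches the total audience size. -/
def StandingOvation (k : ℕ) (p : ℕ → ℕ) : Prop :=
  ∃ t, applause p t = ∑ j ∈ Finset.range (k + 1), p j

/-- `p` is `s`-soluble iff for every `1 ≤ s' ≤ s`, `∑_{j=0}^{s'-1} p j ≥ s'`. -/
def Soluble (s : ℕ) (p : ℕ → ℕ) : Prop :=
  ∀ s', 1 ≤ s' → s' ≤ s → s' ≤ ∑ j ∈ Finset.range s', p j

/-- `r(p)`: the least number `n` of invited friends (with shyness levels in `[0,k]`)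
such that the augmented audience `p + q` produces a standing ovation. -/
noncomputable def ovationNumber (k : ℕ) (p : ℕ → ℕ) : ℕ :=
  sInf {n : ℕ | ∃ q : ℕ → ℕ, (∀ j, k < j → q j = 0) ∧
    (∑ j ∈ Finset.range (k + 1), q j) = n ∧
    StandingOvation k (fun j => p j + q j)}

open Finset

theorem sum_range_add_sum_Icc (f : ℕ → ℕ) {m n : ℕ} (h : m ≤ n + 1) :
    ∑ j ∈ range m, f j + ∑ j ∈ Icc m n, f j = ∑ j ∈ range (n + 1), f j := by
  rw [← Ico_add_one_right_eq_Icc, sum_range_add_sum_Ico f h]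

theorem applause_succ (p : ℕ → ℕ) (t : ℕ) :
    applause p (t + 1) = ∑ j ∈ range (applause p t + 1), p j := rfl

theorem applause_le_sum_range_of_sum_range_lt {p : ℕ → ℕ} {s : ℕ}
    (hblock : ∑ j ∈ range s, p j < s) (t : ℕ) :
    applause p t ≤ ∑ j ∈ range s, p j := by
  have sum_le {m : ℕ} (hm : m ≤ s) : ∑ j ∈ range m, p j ≤ ∑ j ∈ range s, p j :=
    sum_le_sum_of_subset (range_subset_range.mpr hm)
  induction t with
  | zero => simpa [applause] using sum_le (m := 1) (by omega)
  | succ t ih => exact applause_succ p t ▸ sum_le (by omega)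

theorem stmt_1_general (k : ℕ) (p : ℕ → ℕ)
    (s' : ℕ) (hs'k : s' ≤ k)
    (hblock : ∑ j ∈ Finset.range s', p j < s') :
    (∀ t, applause p t ≤ ∑ j ∈ Finset.range s', p j) ∧
      (0 < ∑ j ∈ Finset.Icc s' k, p j → ¬ StandingOvation k p) := by
  refine ⟨applause_le_sum_range_of_sum_range_lt hblock, fun hpos ⟨t, ht⟩ => ?_⟩
  have hle := applause_le_sum_range_of_sum_range_lt hblock t
  rw [← sum_range_add_sum_Icc p (by omega : s' ≤ k + 1)] at ht
  omega

theorem stmt_1 (k : ℕ) (p : ℕ → ℕ) (hp : ∀ j, k < j → p j = 0)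
    (s' : ℕ) (hs'1 : 1 ≤ s') (hs'k : s' ≤ k)
    (hblock : ∑ j ∈ Finset.range s', p j < s') :
    (∀ t, applause p t ≤ ∑ j ∈ Finset.range s', p j) ∧
      (0 < ∑ j ∈ Finset.Icc s' k, p j → ¬ StandingOvation k p) :=
  stmt_1_general k p s' hs'k hblock
end

section
/- If the audience p is k-soluble and N t < ∑_{j=0}^{k} p j, then N (t+1) ≥ N t + 1 (at every stage before full ovation, at least one more spectator stands up). -/
/-
A soluble audience has at least `s'` spectators of shyness below `s'` for every `s' ≤ k`;
beyond `k` every prefix already contains the whole audience. Either way, whenever fewer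
than all spectators stand, the next prefix sum exceeds the number standing.
-/

lemma sum_range_eq_sum_range_succ_of_support {k n : ℕ} {p : ℕ → ℕ}
    (hp : ∀ j, k < j → p j = 0) (hkn : k < n) :
    ∑ j ∈ Finset.range n, p j = ∑ j ∈ Finset.range (k + 1), p j :=
  (Finset.sum_subset (Finset.range_subset_range.mpr hkn) fun j hjn hjk ↦
    hp j (by simpa using hjk)).symm

lemma Soluble.succ_le_sum_range {k m : ℕ} {p : ℕ → ℕ} (hsol : Soluble k p)
    (hp : ∀ j, k < j → p j = 0) (hm : m < ∑ j ∈ Finset.range (k + 1), p j) :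
    m + 1 ≤ ∑ j ∈ Finset.range (m + 1), p j := by
  by_cases hmk : m + 1 ≤ k
  · exact hsol (m + 1) le_add_self hmk
  · rwa [sum_range_eq_sum_range_succ_of_support hp (by omega)]

theorem stmt_2 (k : ℕ) (p : ℕ → ℕ) (hp : ∀ j, k < j → p j = 0)
    (hsol : Soluble k p) (t : ℕ)
    (ht : applause p t < ∑ j ∈ Finset.range (k + 1), p j) :
    applause p t + 1 ≤ applause p (t + 1) :=
  hsol.succ_le_sum_range hp ht
end

section
/- Let s : ℕ with s + 1 ≤ k. If the audience p is s-soluble but (s+1)-insoluble, then for every s' ≤ s the audience p + δ_{s'} obtained by adding one spectator with shyness level s' (i.e., increasing p s' by 1 and leaving all other values unchanged) is (s+1)-soluble. -/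
/-! Adding a spectator only increases prefix sums, so `s`-solubility is kept. The one new
condition, at `s + 1`, holds since `∑_{j ≤ s} p j ≥ s` already and the new spectator, of
shyness at most `s`, adds one to that sum. -/

open Finset

theorem soluble_succ_iff {s : ℕ} {p : ℕ → ℕ} :
    Soluble (s + 1) p ↔ Soluble s p ∧ s + 1 ≤ ∑ j ∈ range (s + 1), p j := by
  constructor
  · intro h
    exact ⟨fun t ht1 hts => h t ht1 (by omega), h (s + 1) (by omega) le_rfl⟩
  · rintro ⟨h, hlast⟩ t ht1 hts
    rcases Nat.lt_or_eq_of_le hts with hlt | rfl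
    · exact h t ht1 (by omega)
    · exact hlast

theorem Soluble.mono {s : ℕ} {p q : ℕ → ℕ} (hpq : ∀ j, p j ≤ q j) (h : Soluble s p) :
    Soluble s q := fun t ht1 hts =>
  (h t ht1 hts).trans (sum_le_sum fun j _ => hpq j)

theorem Soluble.le_sum_range_succ {s : ℕ} {p : ℕ → ℕ} (h : Soluble s p) :
    s ≤ ∑ j ∈ range (s + 1), p j := by
  rcases Nat.eq_zero_or_pos s with rfl | hs
  · exact Nat.zero_le _
  · calc s ≤ ∑ j ∈ range s, p j := h s hs le_rfl
      _ ≤ ∑ j ∈ range (s + 1), p j := sum_le_sum_of_subset (range_subset_range.mpr s.le_succ)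

theorem stmt_5_general (p : ℕ → ℕ)
    (s : ℕ) (hsol : Soluble s p)
    (s' : ℕ) (hs' : s' ≤ s) :
    Soluble (s + 1) (fun j => p j + if j = s' then 1 else 0) := by
  refine soluble_succ_iff.mpr ⟨hsol.mono fun j => Nat.le_add_right _ _, ?_⟩
  have hs'_mem : s' ∈ range (s + 1) := mem_range.mpr (Nat.lt_succ_of_le hs')
  rw [sum_add_distrib, sum_ite_eq' _ _ (fun _ => 1), if_pos hs'_mem]
  exact Nat.add_le_add_right hsol.le_sum_range_succ 1

theorem stmt_5 (k : ℕ) (p : ℕ → ℕ) (hp : ∀ j, k < j → p j = 0)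
    (s : ℕ) (hsk : s + 1 ≤ k) (hsol : Soluble s p) (hins : ¬ Soluble (s + 1) p)
    (s' : ℕ) (hs' : s' ≤ s) :
    Soluble (s + 1) (fun j => p j + if j = s' then 1 else 0) :=
  stmt_5_general p s hsol s' hs'
end

section
/- If the audience p is k-soluble, then r(p) = 0. -/
/-!
Write `S` for the size of the audience. Every value of the applause process is a partial sum
`∑_{j ≤ n} p j`, hence at most `S`; solubility says that such a partial sum is at least
`min (n + 1) S`. So as long as the process has not reached `S` it grows by at least one per
step, and it reaches `S` after at most `S` steps.
-/

open Finset

variable {k : ℕ} {p : ℕ → ℕ}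

theorem sum_range_eq_of_support_le {M : Type*} [AddCommMonoid M] {f : ℕ → M}
    (hf : ∀ j, k < j → f j = 0) {n : ℕ} (hn : k + 1 ≤ n) :
    ∑ j ∈ range n, f j = ∑ j ∈ range (k + 1), f j := by
  refine (sum_subset (range_subset_range.2 hn) fun j _ hj => hf j ?_).symm
  simpa using hj

theorem sum_range_le_of_support_le (hp : ∀ j, k < j → p j = 0) (n : ℕ) :
    ∑ j ∈ range n, p j ≤ ∑ j ∈ range (k + 1), p j := by
  rcases le_total n (k + 1) with hn | hn
  · exact sum_le_sum_of_subset (range_subset_range.2 hn)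
  · exact (sum_range_eq_of_support_le hp hn).le

theorem Soluble.min_le_sum_range (hsol : Soluble k p) (hp : ∀ j, k < j → p j = 0) (n : ℕ) :
    min (n + 1) (∑ j ∈ range (k + 1), p j) ≤ ∑ j ∈ range (n + 1), p j := by
  rcases le_or_gt (n + 1) k with hn | hn
  · exact min_le_of_left_le (hsol (n + 1) n.succ_pos hn)
  · exact min_le_of_right_le (sum_range_eq_of_support_le hp hn).ge

variable (p) in
theorem applause_eq_sum_range :
    ∀ t, ∃ n, applause p t = ∑ j ∈ range (n + 1), p j
  | 0 => ⟨0, by simp [applause]⟩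
  | t + 1 => ⟨applause p t, rfl⟩

theorem applause_le_sum (hp : ∀ j, k < j → p j = 0) (t : ℕ) :
    applause p t ≤ ∑ j ∈ range (k + 1), p j := by
  obtain ⟨n, hn⟩ := applause_eq_sum_range p t
  exact hn ▸ sum_range_le_of_support_le hp (n + 1)

theorem Soluble.min_le_applause (hsol : Soluble k p) (hp : ∀ j, k < j → p j = 0) (t : ℕ) :
    min (t + 1) (∑ j ∈ range (k + 1), p j) ≤ applause p t := by
  induction t with
  | zero => simpa [applause] using hsol.min_le_sum_range hp 0
  | succ t ih =>
    have step := hsol.min_le_sum_range hp (applause p t)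
    rw [applause]
    omega

theorem Soluble.standingOvation (hsol : Soluble k p) (hp : ∀ j, k < j → p j = 0) :
    StandingOvation k p := by
  refine ⟨∑ j ∈ range (k + 1), p j, le_antisymm (applause_le_sum hp _) ?_⟩
  simpa using hsol.min_le_applause hp (∑ j ∈ range (k + 1), p j)

theorem stmt_6 (k : ℕ) (p : ℕ → ℕ) (hp : ∀ j, k < j → p j = 0)
    (hsol : Soluble k p) : ovationNumber k p = 0 :=
  Nat.sInf_eq_zero.2 <| Or.inl ⟨0, fun _ _ => rfl, by simp, by simpa using hsol.standingOvation hp⟩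
end

section
/- For every audience p supported on [0, k], one has r(p) ≤ k. -/
/-!
Invite `k` friends of shyness `0`. They stand up at once, so after the first round at least `k`
spectators are standing, and then everybody of shyness at most `k`, i.e. the whole audience,
stands up in the next round.
-/

theorem sum_range_succ_eq_of_support_le {k n : ℕ} {p : ℕ → ℕ} (hp : ∀ j, k < j → p j = 0)
    (hkn : k ≤ n) :
    ∑ j ∈ Finset.range (n + 1), p j = ∑ j ∈ Finset.range (k + 1), p j := by
  refine (Finset.sum_subset (Finset.range_subset_range.2 (by omega)) fun j _ hj => ?_).symm
  exact hp j (by simpa using hj)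

theorem applause_succ_eq_of_le {k : ℕ} {p : ℕ → ℕ} (hp : ∀ j, k < j → p j = 0) {t : ℕ}
    (ht : k ≤ applause p t) :
    applause p (t + 1) = ∑ j ∈ Finset.range (k + 1), p j :=
  sum_range_succ_eq_of_support_le hp ht

theorem standingOvation_of_le_apply_zero {k : ℕ} {p : ℕ → ℕ} (hp : ∀ j, k < j → p j = 0)
    (h0 : k ≤ p 0) : StandingOvation k p :=
  ⟨1, applause_succ_eq_of_le hp h0⟩

theorem stmt_8 (k : ℕ) (p : ℕ → ℕ) (hp : ∀ j, k < j → p j = 0) :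
    ovationNumber k p ≤ k := by
  set q : ℕ → ℕ := Pi.single 0 k
  have hq : ∀ j, k < j → q j = 0 := fun j hj => by simp [q, Nat.ne_zero_of_lt hj]
  refine Nat.sInf_le ⟨q, hq, by simp [q], ?_⟩
  refine standingOvation_of_le_apply_zero (fun j hj => ?_) (by simp [q])
  rw [hp j hj, hq j hj]
end
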